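/- Let k ≥ 1 be an integer and let S : ℝ → ℝ be (k+1)-times continuously differentiable, satisfy the drift tail condition, and suppose there exist C₀ > 0 and ν ≥ 0 such that |S^{(k+1)}(x)| ≤ C₀(1 + |x|^ν) for all x ∈ ℝ. Let φ(λ) = ∫_ℝ e^{iλx} f_S(x) dx be the Fourier transform of the invariant density f_S. Then ∫_ℝ |λ|^{2k+4} |φ(λ)|² dλ < ∞. -/

import Mathlib

/-!
Write `G = exp (2 ∫₀ˣ S)`, so that `G' = 2 S G`. Integrating the bound on `S⁽ᵏ⁺¹⁾` shows that
`S, …, S⁽ᵏ⁺¹⁾` grow at most polynomially, and then Leibniz' rule shows inductively that each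
`G⁽ᵐ⁾`, `m ≤ k + 2`, is `G` times a polynomially bounded function. The drift tail condition gives
`G x ≤ C e^{-2c|x|}`, so all these derivatives decay exponentially and lie in `L¹ ∩ L²`.
Finally `|λ|^{k+2} |φ(λ)|` is, after the change of variables `λ = -2πξ`, the modulus of the
Fourier transform of `f_S⁽ᵏ⁺²⁾`, which is square integrable by Plancherel.
-/

open MeasureTheory Asymptotics Filter Real Finset intervalIntegral FourierTransform SchwartzMap
open scoped ENNReal

theorem integrable_exp_neg_mul_abs {c : ℝ} (hc : 0 < c) :
    Integrable fun x : ℝ => exp (-c * |x|) := by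
  rw [← integrableOn_univ, ← Set.Iic_union_Ioi (a := 0)]
  refine ((integrableOn_exp_mul_Iic hc 0).congr_fun (fun x hx => ?_) measurableSet_Iic).union
    ((integrableOn_exp_mul_Ioi (neg_neg_of_pos hc) 0).congr_fun (fun x hx => ?_)
      measurableSet_Ioi)
  · rw [abs_of_nonpos (Set.mem_Iic.mp hx), neg_mul_neg]
  · rw [abs_of_pos (Set.mem_Ioi.mp hx)]

theorem memLp_exp_neg_mul_abs {c : ℝ} (hc : 0 < c) (p : ℝ≥0∞) :
    MemLp (fun x : ℝ => exp (-c * |x|)) p := by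
  have hmeas : AEStronglyMeasurable (fun x : ℝ => exp (-c * |x|)) := by fun_prop
  rcases eq_or_ne p 0 with rfl | hp0
  · exact memLp_zero_iff_aestronglyMeasurable.mpr hmeas
  rcases eq_or_ne p ∞ with rfl | hptop
  · refine memLp_top_of_bound hmeas 1 (ae_of_all _ fun x => ?_)
    rw [Real.norm_eq_abs, abs_exp, exp_le_one_iff]
    nlinarith [abs_nonneg x]
  rw [← integrable_norm_rpow_iff hmeas hp0 hptop]
  refine (integrable_exp_neg_mul_abs (mul_pos (ENNReal.toReal_pos hp0 hptop) hc)).congr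
    (ae_of_all _ fun x => ?_)
  simp only [Real.norm_eq_abs, abs_exp, ← exp_mul]
  ring_nf

theorem MeasureTheory.MemLp.of_isBigO_top {α E F : Type*} [MeasurableSpace α] {μ : Measure α}
    [NormedAddCommGroup E] [NormedAddCommGroup F] {p : ℝ≥0∞} {f : α → E} {g : α → F}
    (hfm : AEStronglyMeasurable f μ) (hfg : f =O[⊤] g) (hg : MemLp g p μ) : MemLp f p μ := by
  obtain ⟨C, hC⟩ := isBigO_top.mp hfg
  exact (hg.norm.const_mul C).of_le hfm
    (ae_of_all _ fun x => (hC x).trans (by simpa using le_abs_self (C * ‖g x‖)))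

theorem isBigO_top_one_add_abs_pow {M N : ℕ} (h : M ≤ N) :
    (fun x : ℝ => (1 + |x|) ^ M) =O[⊤] fun x => (1 + |x|) ^ N := by
  refine isBigO_top.mpr ⟨1, fun x => ?_⟩
  have hx : 1 ≤ 1 + |x| := le_add_of_nonneg_right (abs_nonneg x)
  simp only [norm_pow, Real.norm_eq_abs, abs_of_nonneg (zero_le_one.trans hx), one_mul]
  exact pow_le_pow_right₀ hx h

theorem isBigO_top_one_add_abs_pow_mul_exp (N : ℕ) {b c : ℝ} (hcb : c < b) :
    (fun x : ℝ => (1 + |x|) ^ N * exp (-b * |x|)) =O[⊤] fun x => exp (-c * |x|) := by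
  have hd : 0 < b - c := sub_pos.mpr hcb
  refine isBigO_top.mpr ⟨N.factorial * exp (b - c) / (b - c) ^ N, fun x => ?_⟩
  have hx : 0 ≤ 1 + |x| := by positivity
  have hexp := Real.pow_div_factorial_le_exp (x := (b - c) * (1 + |x|)) (mul_nonneg hd.le hx) N
  rw [mul_pow, div_le_iff₀ (by positivity)] at hexp
  simp only [norm_mul, norm_pow, Real.norm_eq_abs, abs_exp, abs_of_nonneg hx]
  calc (1 + |x|) ^ N * exp (-b * |x|)
      = (b - c) ^ N * (1 + |x|) ^ N / (b - c) ^ N * exp (-b * |x|) := by field_simp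
    _ ≤ exp ((b - c) * (1 + |x|)) * N.factorial / (b - c) ^ N * exp (-b * |x|) := by gcongr
    _ = N.factorial / (b - c) ^ N * (exp ((b - c) * (1 + |x|)) * exp (-b * |x|)) := by ring
    _ = N.factorial / (b - c) ^ N * (exp (b - c) * exp (-c * |x|)) := by
      rw [← exp_add, ← exp_add]; ring_nf
    _ = N.factorial * exp (b - c) / (b - c) ^ N * exp (-c * |x|) := by ring

def PolyBoundedBy (w f : ℝ → ℝ) : Prop :=
  ∃ N : ℕ, f =O[⊤] fun x => (1 + |x|) ^ N * w x

namespace PolyBoundedBy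

variable {w f g u : ℝ → ℝ}

theorem zero : PolyBoundedBy w 0 := ⟨0, isBigO_zero _ _⟩

theorem add (hf : PolyBoundedBy w f) (hg : PolyBoundedBy w g) : PolyBoundedBy w (f + g) := by
  obtain ⟨M, hM⟩ := hf
  obtain ⟨N, hN⟩ := hg
  have weaken {K : ℕ} (hK : K ≤ max M N) :=
    (isBigO_top_one_add_abs_pow hK).mul (isBigO_refl w ⊤)
  exact ⟨max M N,
    (hM.trans (weaken (le_max_left M N))).add (hN.trans (weaken (le_max_right M N)))⟩

theorem sum {ι : Type*} (s : Finset ι) {F : ι → ℝ → ℝ} (h : ∀ i ∈ s, PolyBoundedBy w (F i)) :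
    PolyBoundedBy w (∑ i ∈ s, F i) :=
  Finset.sum_induction _ _ (fun _ _ => add) zero h

theorem const_mul (a : ℝ) (hf : PolyBoundedBy w f) : PolyBoundedBy w fun x => a * f x :=
  let ⟨N, h⟩ := hf; ⟨N, h.const_mul_left a⟩

theorem mul (hu : PolyBoundedBy 1 u) (hf : PolyBoundedBy w f) :
    PolyBoundedBy w fun x => u x * f x := by
  obtain ⟨M, hM⟩ := hu
  obtain ⟨N, hN⟩ := hf
  refine ⟨M + N, (hM.mul hN).congr_right fun x => ?_⟩
  simp only [Pi.one_apply, pow_add]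
  ring

theorem isBigO_exp (hf : PolyBoundedBy w f) {b c : ℝ}
    (hw : w =O[⊤] fun x => exp (-b * |x|)) (hcb : c < b) :
    f =O[⊤] fun x => exp (-c * |x|) := by
  obtain ⟨N, hN⟩ := hf
  exact hN.trans (((isBigO_refl _ ⊤).mul hw).trans (isBigO_top_one_add_abs_pow_mul_exp N hcb))

theorem of_le_rpow {C ν : ℝ} (hν : 0 ≤ ν) (h : ∀ x, |f x| ≤ C * (1 + |x| ^ ν)) :
    PolyBoundedBy 1 f := by
  refine ⟨⌈ν⌉₊, isBigO_top.mpr ⟨2 * |C|, fun x => ?_⟩⟩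
  have hx : 1 ≤ 1 + |x| := le_add_of_nonneg_right (abs_nonneg x)
  have hpow : |x| ^ ν ≤ (1 + |x|) ^ ⌈ν⌉₊ := by
    calc |x| ^ ν ≤ (1 + |x|) ^ ν := by gcongr; linarith
      _ ≤ (1 + |x|) ^ (⌈ν⌉₊ : ℝ) := Real.rpow_le_rpow_of_exponent_le hx (Nat.le_ceil ν)
      _ = (1 + |x|) ^ ⌈ν⌉₊ := Real.rpow_natCast _ _
  have hone : 1 ≤ (1 + |x|) ^ ⌈ν⌉₊ := one_le_pow₀ hx
  simp only [Real.norm_eq_abs, Pi.one_apply, mul_one, abs_pow,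
    abs_of_nonneg (zero_le_one.trans hx)]
  calc |f x| ≤ C * (1 + |x| ^ ν) := h x
    _ ≤ |C| * (1 + |x| ^ ν) := by gcongr; exact le_abs_self C
    _ ≤ 2 * |C| * (1 + |x|) ^ ⌈ν⌉₊ := by nlinarith [abs_nonneg C]

theorem of_deriv (hf : Differentiable ℝ f) (hf' : PolyBoundedBy 1 (deriv f)) :
    PolyBoundedBy 1 f := by
  obtain ⟨N, hN⟩ := hf'
  obtain ⟨C, hC, hbound⟩ := hN.exists_nonneg
  refine ⟨N + 1, isBigO_top.mpr ⟨|f 0| + C, fun x => ?_⟩⟩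
  have hx : 1 ≤ 1 + |x| := le_add_of_nonneg_right (abs_nonneg x)
  have hderiv : ∀ y ∈ Metric.closedBall (0 : ℝ) |x|, ‖deriv f y‖ ≤ C * (1 + |x|) ^ N := by
    intro y hy
    have hy : 1 + |y| ≤ 1 + |x| := by simpa using hy
    calc ‖deriv f y‖ ≤ C * (1 + |y|) ^ N := by
          simpa [abs_of_nonneg (by positivity : (0 : ℝ) ≤ 1 + |y|)] using
            isBigOWith_top.mp hbound y
      _ ≤ C * (1 + |x|) ^ N := by gcongr
  have hmvt := Convex.norm_image_sub_le_of_norm_deriv_le (fun y _ => hf y) hderiv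
    (convex_closedBall 0 |x|) (Metric.mem_closedBall_self (abs_nonneg x))
    (by simp : x ∈ Metric.closedBall (0 : ℝ) |x|)
  simp only [Real.norm_eq_abs, sub_zero, Pi.one_apply, mul_one, abs_pow,
    abs_of_nonneg (zero_le_one.trans hx)] at hmvt ⊢
  have hone : 1 ≤ (1 + |x|) ^ N := one_le_pow₀ hx
  calc |f x| ≤ |f 0| + C * (1 + |x|) ^ N * |x| := by
        linarith [abs_sub_abs_le_abs_sub (f x) (f 0)]
    _ ≤ (|f 0| + C) * (1 + |x|) ^ (N + 1) := by
      rw [pow_succ]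
      have h1 : |f 0| ≤ |f 0| * ((1 + |x|) ^ N * (1 + |x|)) :=
        le_mul_of_one_le_right (abs_nonneg _) (one_le_mul_of_one_le_of_one_le hone hx)
      nlinarith [mul_nonneg hC (zero_le_one.trans hone)]

theorem of_iteratedDeriv {n : ℕ} (hf : ContDiff ℝ n f)
    (hn : PolyBoundedBy 1 (iteratedDeriv n f)) :
    ∀ i ≤ n, PolyBoundedBy 1 (iteratedDeriv i f) := by
  induction n generalizing f with
  | zero => intro i hi; rwa [Nat.le_zero.mp hi]
  | succ n ih =>
    rw [iteratedDeriv_succ'] at hn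
    have hderivs := ih hf.deriv' hn
    rintro (_ | i) hi
    · rw [iteratedDeriv_zero]
      exact of_deriv (hf.differentiable (by simp)) (by simpa using hderivs 0 (Nat.zero_le n))
    · rw [iteratedDeriv_succ']
      exact hderivs i (by omega)

theorem iteratedDeriv_of_deriv_eq_mul {g a : ℝ → ℝ} {n : ℕ} (hg : ContDiff ℝ (n + 1) g)
    (ha : ContDiff ℝ n a) (hga : deriv g = a * g)
    (hpoly : ∀ i ≤ n, PolyBoundedBy 1 (iteratedDeriv i a)) :
    ∀ m ≤ n + 1, PolyBoundedBy g (iteratedDeriv m g) := by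
  intro m
  induction m using Nat.strong_induction_on with
  | _ m ih =>
    intro hm
    rcases m with _ | m
    · exact ⟨0, by simpa using isBigO_refl g ⊤⟩
    have hLeibniz : iteratedDeriv (m + 1) g = ∑ i ∈ range (m + 1),
        fun x => (m.choose i : ℝ) * (iteratedDeriv i a x * iteratedDeriv (m - i) g x) := by
      funext x
      rw [iteratedDeriv_succ', hga,
        iteratedDeriv_mul (ha.contDiffAt.of_le (by exact_mod_cast (by omega : m ≤ n)))
          (hg.contDiffAt.of_le (by exact_mod_cast (by omega : m ≤ n + 1))),
        Finset.sum_apply]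
      simp only [mul_assoc]
    rw [hLeibniz]
    exact sum _ fun i hi => const_mul _ <| mul (hpoly i (by simp at hi; omega))
      (ih (m - i) (by omega) (by omega))

end PolyBoundedBy

theorem exists_integral_le_sub_mul_of_le_neg {S : ℝ → ℝ} (hS : Continuous S) {A c : ℝ}
    (hc : 0 ≤ c) (hSA : ∀ x ≥ A, S x ≤ -c) :
    ∃ B, ∀ x ≥ 0, ∫ t in (0 : ℝ)..x, S t ≤ B - c * x := by
  have hF : Continuous fun x => ∫ t in (0 : ℝ)..x, S t :=
    continuous_primitive (fun _ _ => hS.intervalIntegrable _ _) 0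
  obtain ⟨M, hM⟩ := (isCompact_Icc (a := (0 : ℝ)) (b := A)).bddAbove_image hF.continuousOn
  refine ⟨max (M + c * A) ((∫ t in (0 : ℝ)..A, S t) + c * A), fun x hx => ?_⟩
  rcases le_total x A with hxA | hAx
  · have hFx : ∫ t in (0 : ℝ)..x, S t ≤ M := hM ⟨x, ⟨hx, hxA⟩, rfl⟩
    nlinarith [le_max_left (M + c * A) ((∫ t in (0 : ℝ)..A, S t) + c * A)]
  · have htail : ∫ t in A..x, S t ≤ ∫ _ in A..x, -c :=
      integral_mono_on hAx (hS.intervalIntegrable _ _) intervalIntegrable_const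
        fun t ht => hSA t ht.1
    rw [intervalIntegral.integral_const, smul_eq_mul] at htail
    rw [← integral_add_adjacent_intervals (hS.intervalIntegrable 0 A)
      (hS.intervalIntegrable A x)]
    nlinarith [le_max_right (M + c * A) ((∫ t in (0 : ℝ)..A, S t) + c * A)]

theorem exists_integral_le_sub_mul_abs {S : ℝ → ℝ} (hS : Continuous S) {A c : ℝ} (hc : 0 ≤ c)
    (hright : ∀ x ≥ A, S x ≤ -c) (hleft : ∀ x ≤ -A, c ≤ S x) :
    ∃ B, ∀ x, ∫ t in (0 : ℝ)..x, S t ≤ B - c * |x| := by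
  obtain ⟨B₁, hB₁⟩ := exists_integral_le_sub_mul_of_le_neg hS hc hright
  -- The left tail of `S` is the right tail of `t ↦ -S (-t)`.
  obtain ⟨B₂, hB₂⟩ := exists_integral_le_sub_mul_of_le_neg (S := fun t => -S (-t))
    (by fun_prop) hc fun x hx => neg_le_neg (hleft (-x) (neg_le_neg hx))
  refine ⟨max B₁ B₂, fun x => ?_⟩
  rcases le_total 0 x with hx | hx
  · rw [abs_of_nonneg hx]
    linarith [hB₁ x hx, le_max_left B₁ B₂]
  · have hreflect : ∫ t in (0 : ℝ)..-x, -S (-t) = ∫ t in (0 : ℝ)..x, S t := by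
      rw [intervalIntegral.integral_neg, intervalIntegral.integral_comp_neg, neg_neg, neg_zero,
        integral_symm, neg_neg]
    rw [abs_of_nonpos hx, ← hreflect]
    linarith [hB₂ (-x) (neg_nonneg.mpr hx), le_max_right B₁ B₂]

-- `G_S` in the paper.
noncomputable def speedDensity (S : ℝ → ℝ) (x : ℝ) : ℝ :=
  exp (2 * ∫ t in (0 : ℝ)..x, S t)

theorem hasDerivAt_speedDensity {S : ℝ → ℝ} (hS : Continuous S) (x : ℝ) :
    HasDerivAt (speedDensity S) (2 * S x * speedDensity S x) x :=
  (((hS.integral_hasStrictDerivAt 0 x).hasDerivAt.const_mul 2).exp).congr_deriv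
    (by rw [speedDensity]; ring)

theorem deriv_speedDensity {S : ℝ → ℝ} (hS : Continuous S) :
    deriv (speedDensity S) = (fun x => 2 * S x) * speedDensity S :=
  funext fun x => (hasDerivAt_speedDensity hS x).deriv

theorem contDiff_speedDensity {S : ℝ → ℝ} {n : ℕ} (hS : ContDiff ℝ n S) :
    ContDiff ℝ (n + 1) (speedDensity S) := by
  have hF : ContDiff ℝ (n + 1) fun x => ∫ t in (0 : ℝ)..x, S t := by
    refine contDiff_succ_iff_deriv.mpr ⟨fun x => ?_, by simp, ?_⟩
    · exact (hS.continuous.integral_hasStrictDerivAt 0 x).hasDerivAt.differentiableAt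
    · rwa [funext (hS.continuous.deriv_integral S 0)]
  exact contDiff_exp.comp (contDiff_const.mul hF)

theorem speedDensity_isBigO_exp {S : ℝ → ℝ} (hS : Continuous S) {A c : ℝ} (hc : 0 ≤ c)
    (hright : ∀ x ≥ A, S x ≤ -c) (hleft : ∀ x ≤ -A, c ≤ S x) :
    speedDensity S =O[⊤] fun x => exp (-(2 * c) * |x|) := by
  obtain ⟨B, hB⟩ := exists_integral_le_sub_mul_abs hS hc hright hleft
  refine isBigO_top.mpr ⟨exp (2 * B), fun x => ?_⟩
  simp only [speedDensity, Real.norm_eq_abs, abs_exp, ← exp_add]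
  exact exp_le_exp.mpr (by nlinarith [hB x])

/- `𝓕 f` and the `L²` Fourier transform of `f` both represent the Fourier transform of `f` as a
tempered distribution, hence agree almost everywhere. -/
theorem memLp_two_fourier_of_integrable {V F : Type*} [NormedAddCommGroup V]
    [InnerProductSpace ℝ V] [FiniteDimensional ℝ V] [MeasurableSpace V] [BorelSpace V]
    [NormedAddCommGroup F] [InnerProductSpace ℂ F] [CompleteSpace F]
    {f : V → F} (hf1 : Integrable f) (hf2 : MemLp f 2) : MemLp (𝓕 f) 2 := by
  set u : Lp F 2 (volume : Measure V) := 𝓕 (hf2.toLp f)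
  refine (Lp.memLp u).ae_eq ?_
  have hcont : Continuous (𝓕 f) :=
    VectorFourier.fourierIntegral_continuous Real.continuous_fourierChar
      (innerSL ℝ).continuous₂ hf1
  refine ae_eq_of_integral_contDiff_smul_eq ((Lp.memLp _).locallyIntegrable (by norm_num))
    hcont.locallyIntegrable fun g hg hgc => ?_
  set ψ : 𝓢(V, ℂ) := (hgc.comp_left (g := Complex.ofRealCLM) rfl).toSchwartzMap
    (by fun_prop)
  have hψ : ∀ (x : V) (y : F), g x • y = ψ x • y := fun x y => (Complex.coe_smul _ _).symm
  calc ∫ x, g x • u x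
      = (u : 𝓢'(V, F)) ψ := by simp [hψ]
    _ = 𝓕 ((hf2.toLp f : Lp F 2 (volume : Measure V)) : 𝓢'(V, F)) ψ := by
      rw [Lp.fourier_toTemperedDistribution_eq]
    _ = ∫ x, 𝓕 ψ x • f x := by
      simp only [TemperedDistribution.fourier_apply, Lp.toTemperedDistribution_apply]
      exact integral_congr_ae (hf2.coeFn_toLp.mono fun x hx => congrArg (𝓕 ψ x • ·) hx)
    _ = ∫ x, g x • 𝓕 f x := by
      simp only [hψ]
      simpa using! VectorFourier.integral_fourierIntegral_smul_eq_flip (L := innerₗ V)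
        Real.continuous_fourierChar continuous_inner ψ.integrable hf1

theorem iteratedDeriv_ofReal_comp {h : ℝ → ℝ} {n : ℕ} (hh : ContDiff ℝ n h) {j : ℕ}
    (hj : j ≤ n) :
    iteratedDeriv j (fun x => (h x : ℂ)) = fun x => ((iteratedDeriv j h x : ℝ) : ℂ) := by
  funext x
  have := Complex.ofRealCLM.iteratedFDeriv_comp_left (hh.contDiffAt (x := x)) (i := j)
    (by exact_mod_cast hj)
  simp only [iteratedDeriv_eq_iteratedFDeriv]
  exact congrArg (fun L => L fun _ => (1 : ℝ)) this

theorem fourier_neg_inv_two_pi_mul (f : ℝ → ℂ) (l : ℝ) :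
    𝓕 f (-(2 * π)⁻¹ * l) = ∫ x : ℝ, Complex.exp (Complex.I * l * x) * f x := by
  rw [Real.fourier_real_eq_integral_exp_smul]
  refine integral_congr_ae (ae_of_all _ fun x => ?_)
  have hπ : (2 * π : ℝ) ≠ 0 := by positivity
  simp only [smul_eq_mul]
  congr 2
  push_cast
  field_simp

theorem integrable_abs_pow_mul_sq_norm_integral_cexp {h : ℝ → ℝ} {n : ℕ}
    (hh : ContDiff ℝ n h) (hint : ∀ j ≤ n, Integrable (iteratedDeriv j h))
    (hL2 : MemLp (iteratedDeriv n h) 2) :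
    Integrable fun l : ℝ =>
      |l| ^ (2 * n) * ‖∫ x : ℝ, Complex.exp (Complex.I * l * x) * (h x : ℂ)‖ ^ 2 := by
  set hC : ℝ → ℂ := fun x => (h x : ℂ)
  have hCint : ∀ j ≤ n, Integrable (iteratedDeriv j hC) := fun j hj => by
    rw [iteratedDeriv_ofReal_comp hh hj]; exact (hint j hj).ofReal
  have hCL2 : MemLp (iteratedDeriv n hC) 2 := by
    rw [iteratedDeriv_ofReal_comp hh le_rfl]; exact hL2.ofReal
  have hCdiff : ContDiff ℝ n hC := Complex.ofRealCLM.contDiff.comp hh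
  have hfourier := Real.fourier_iteratedDeriv (N := n) hCdiff
    (fun j hj => hCint j (by exact_mod_cast hj)) le_rfl
  have hsq : Integrable fun ξ => ‖𝓕 (iteratedDeriv n hC) ξ‖ ^ 2 :=
    (memLp_two_fourier_of_integrable (hCint n le_rfl) hCL2).integrable_norm_pow two_ne_zero
  refine (hsq.comp_mul_left' (R := -(2 * π)⁻¹) (by simp [pi_ne_zero])).congr
    (ae_of_all _ fun l => ?_)
  have hfreq : ‖2 * (π : ℂ) * Complex.I * ((-(2 * π)⁻¹ * l : ℝ) : ℂ)‖ = |l| := by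
    have hπ : (π : ℂ) ≠ 0 := Complex.ofReal_ne_zero.mpr pi_ne_zero
    rw [show 2 * (π : ℂ) * Complex.I * ((-(2 * π)⁻¹ * l : ℝ) : ℂ) = -(Complex.I * l) by
      push_cast; field_simp]
    simp
  rw [hfourier]
  simp only [norm_smul, norm_pow, fourier_neg_inv_two_pi_mul, hfreq]
  rw [mul_pow, ← pow_mul, mul_comm n 2]

theorem stmt6_general (k : ℕ) (S : ℝ → ℝ) (hS : ContDiff ℝ (k + 1) S)
    (htail : ∃ A ≥ (0 : ℝ), ∃ c > (0 : ℝ),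
      (∀ x ≥ A, S x ≤ -c) ∧ (∀ x ≤ -A, c ≤ S x))
    (C₀ ν : ℝ) (hν : 0 ≤ ν)
    (hgrowth : ∀ x : ℝ, |iteratedDeriv (k + 1) S x| ≤ C₀ * (1 + |x| ^ ν)) :
    Integrable (fun l : ℝ =>
      |l| ^ (2 * k + 4) *
        ‖∫ x : ℝ, Complex.exp (Complex.I * l * x) *
          ((Real.exp (2 * ∫ t in (0:ℝ)..x, S t) /
            ∫ y : ℝ, Real.exp (2 * ∫ t in (0:ℝ)..y, S t) : ℝ) : ℂ)‖ ^ 2) := by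
  obtain ⟨A, -, c, hc, hright, hleft⟩ := htail
  have hS' : ContDiff ℝ (k + 1 : ℕ) S := by exact_mod_cast hS
  have hpoly : ∀ i ≤ k + 1, PolyBoundedBy 1 (iteratedDeriv i fun x => 2 * S x) := fun i hi => by
    rw [show iteratedDeriv i (fun x => 2 * S x) = fun x => 2 * iteratedDeriv i S x from
      funext fun x => iteratedDeriv_const_mul_field 2 S]
    exact ((PolyBoundedBy.of_le_rpow hν hgrowth).of_iteratedDeriv hS' i hi).const_mul 2
  have hG := contDiff_speedDensity hS'
  have hdecay : ∀ m ≤ k + 2, iteratedDeriv m (speedDensity S) =O[⊤] fun x => exp (-c * |x|) :=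
    fun m hm => (PolyBoundedBy.iteratedDeriv_of_deriv_eq_mul hG (contDiff_const.mul hS')
      (deriv_speedDensity hS'.continuous) hpoly m hm).isBigO_exp
      (speedDensity_isBigO_exp hS'.continuous hc.le hright hleft) (by linarith)
  set Z := ∫ y, speedDensity S y
  have hmemLp : ∀ m ≤ k + 2, ∀ p, MemLp (iteratedDeriv m fun x => speedDensity S x / Z) p := by
    intro m hm p
    rw [show iteratedDeriv m (fun x => speedDensity S x / Z) =
      fun x => iteratedDeriv m (speedDensity S) x / Z from
      funext fun x => iteratedDeriv_div_const (speedDensity S) Z]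
    simpa only [div_eq_mul_inv] using (MemLp.of_isBigO_top
      (hG.continuous_iteratedDeriv m (by exact_mod_cast hm)).aestronglyMeasurable
      (hdecay m hm) (memLp_exp_neg_mul_abs hc p)).mul_const Z⁻¹
  rw [show 2 * k + 4 = 2 * (k + 2) by ring]
  exact integrable_abs_pow_mul_sq_norm_integral_cexp (hG.div_const Z)
    (fun j hj => memLp_one_iff_integrable.mp (hmemLp j hj 1)) (hmemLp _ le_rfl 2)

/-- Condition C4 with `τ = 2`: if `S` is `(k+1)`-times continuously differentiable with
polynomially growing `(k+1)`-st derivative and satisfies the drift tail condition, then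
the Fourier transform `φ` of the invariant density `f_S` satisfies
`∫ |λ|^{2k+4} |φ(λ)|² dλ < ∞`. -/
theorem stmt6 (k : ℕ) (hk : 1 ≤ k) (S : ℝ → ℝ) (hS : ContDiff ℝ (k + 1) S)
    (htail : ∃ A ≥ (0 : ℝ), ∃ c > (0 : ℝ),
      (∀ x ≥ A, S x ≤ -c) ∧ (∀ x ≤ -A, c ≤ S x))
    (C₀ ν : ℝ) (hC₀ : 0 < C₀) (hν : 0 ≤ ν)
    (hgrowth : ∀ x : ℝ, |iteratedDeriv (k + 1) S x| ≤ C₀ * (1 + |x| ^ ν)) :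
    Integrable (fun l : ℝ =>
      |l| ^ (2 * k + 4) *
        ‖∫ x : ℝ, Complex.exp (Complex.I * l * x) *
          ((Real.exp (2 * ∫ t in (0:ℝ)..x, S t) /
            ∫ y : ℝ, Real.exp (2 * ∫ t in (0:ℝ)..y, S t) : ℝ) : ℂ)‖ ^ 2) :=
  stmt6_general k S hS htail C₀ ν hν hgrowth
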